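/- arXiv:2307.01150 — 3 statements merged into one kernel-verified Lean document; each statement's English description precedes it below -/
import Mathlib

section
/- Let $n, \delta_m > 0$, $0 < w \le 1$, $b > 1$, and define the set of relief intervals $\mathcal{R} = \bigcup_{k=0}^{K} \mathcal{R}_k$ where $K = \lfloor \log_b((1+w)n/\delta_m) \rfloor$, $\ell_k = b^k \delta_m/(1+w)$, $s_k = w\ell_k$, $n_k = \lfloor (n-\ell_k)/s_k \rfloor$, and $\mathcal{R}_k$ consists of the $n_k+1$ intervals $(q s_k + a_k, q s_k + \ell_k + a_k]$ for $0 \le q \le n_k$ (with $a_k$ a centering shift). Then the cardinality of $\mathcal{R}$ satisfies $|\mathcal{R}| \le \frac{(1+w)b}{w(b-1)} \cdot \frac{n}{\delta_m}$. -/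
/-!
Layer `k` contributes `⌊(n - ℓ_k)/s_k⌋ + 1` intervals, and since `s_k ≤ ℓ_k` (i.e. `w ≤ 1`) this
is at most `n / s_k = (1 + w) n / (w δ) · b⁻ᵏ`. Summing the geometric series over all layers
gives the bound, independently of the number `K` of layers.
-/

open Real Set

lemma ncard_setOf_layers_le {α : Type*} (K : ℤ) (m : ℕ → ℤ) (F : ℕ → ℤ → α) :
    {x | ∃ k : ℕ, (k : ℤ) ≤ K ∧ ∃ q : ℤ, 0 ≤ q ∧ q ≤ m k ∧ x = F k q}.ncard ≤
      ∑ k ∈ Finset.range (K.toNat + 1), (m k + 1).toNat := by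
  classical
  set D := (Finset.range (K.toNat + 1)).sigma fun k => Finset.Icc 0 (m k)
  have hsub : {x | ∃ k : ℕ, (k : ℤ) ≤ K ∧ ∃ q : ℤ, 0 ≤ q ∧ q ≤ m k ∧ x = F k q} ⊆
      (fun p : (_ : ℕ) × ℤ => F p.1 p.2) '' (D : Set ((_ : ℕ) × ℤ)) := by
    rintro x ⟨k, hk, q, hq0, hqm, rfl⟩
    refine ⟨⟨k, q⟩, ?_, rfl⟩
    simp only [D, Finset.coe_sigma, Set.mem_sigma_iff, Finset.coe_range, Set.mem_Iio,
      Finset.coe_Icc, Set.mem_Icc]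
    omega
  calc _ ≤ ((fun p : (_ : ℕ) × ℤ => F p.1 p.2) '' (D : Set ((_ : ℕ) × ℤ))).ncard :=
        Set.ncard_le_ncard hsub (D.finite_toSet.image _)
    _ ≤ D.card := (Set.ncard_image_le D.finite_toSet).trans (Set.ncard_coe_finset D).le
    _ = _ := by simp only [D, Finset.card_sigma, Int.card_Icc, sub_zero]

lemma toNat_floor_sub_div_add_one_le {n ℓ s : ℝ} (hn : 0 ≤ n) (hs : 0 < s) (hsℓ : s ≤ ℓ) :
    ((⌊(n - ℓ) / s⌋ + 1).toNat : ℝ) ≤ n / s := by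
  rcases le_or_gt 0 (⌊(n - ℓ) / s⌋ + 1) with h | h
  · have hcast : ((⌊(n - ℓ) / s⌋ + 1).toNat : ℝ) = ⌊(n - ℓ) / s⌋ + 1 := by
      exact_mod_cast Int.toNat_of_nonneg h
    rw [hcast, le_div_iff₀ hs]
    have hfloor : (⌊(n - ℓ) / s⌋ : ℝ) * s ≤ n - ℓ := (le_div_iff₀ hs).mp (Int.floor_le _)
    linarith
  · rw [Int.toNat_of_nonpos h.le, Nat.cast_zero]
    positivity

lemma sum_range_div_pow_le {b c : ℝ} (hb : 1 < b) (hc : 0 ≤ c) (N : ℕ) :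
    ∑ k ∈ Finset.range N, c / b ^ k ≤ c * b / (b - 1) := by
  have hb0 : 0 < b := by linarith
  have hgeom : ∑ k ∈ Finset.range N, b⁻¹ ^ k ≤ b / (b - 1) := by
    have h := geom_sum_Ico_le_of_lt_one (m := 0) (n := N) (inv_nonneg.2 hb0.le)
      (inv_lt_one_of_one_lt₀ hb)
    have hlim : 1 / (1 - b⁻¹) = b / (b - 1) := by field_simp
    rwa [← Finset.range_eq_Ico, pow_zero, hlim] at h
  calc ∑ k ∈ Finset.range N, c / b ^ k = c * ∑ k ∈ Finset.range N, b⁻¹ ^ k := by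
        rw [Finset.mul_sum]
        simp only [inv_pow, div_eq_mul_inv]
    _ ≤ c * (b / (b - 1)) := by gcongr
    _ = c * b / (b - 1) := by ring

theorem relief_intervals_card_bound_general
    (n δ w b : ℝ) (hn : 0 < n) (hδ : 0 < δ)
    (hw : 0 < w) (hw1 : w ≤ 1) (hb : 1 < b)
    (K : ℤ)
    (ℓ s : ℕ → ℝ) (hℓ : ∀ k, ℓ k = b ^ k * δ / (1 + w))
    (hs : ∀ k, s k = w * ℓ k)
    (nk : ℕ → ℤ) (hnk : ∀ k, nk k = ⌊(n - ℓ k) / s k⌋)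
    (a : ℕ → ℝ)
    (ℛ : Set (Set ℝ))
    (hℛ : ℛ = {R | ∃ k : ℕ, (k : ℤ) ≤ K ∧ ∃ q : ℤ, 0 ≤ q ∧ q ≤ nk k ∧
      R = Set.Ioc ((q : ℝ) * s k + a k) ((q : ℝ) * s k + ℓ k + a k)}) :
    (ℛ.ncard : ℝ) ≤ ((1 + w) * b) / (w * (b - 1)) * (n / δ) := by
  have hℓpos : ∀ k, 0 < ℓ k := fun k => by rw [hℓ]; positivity
  have hspos : ∀ k, 0 < s k := fun k => by rw [hs]; exact mul_pos hw (hℓpos k)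
  have hsℓ : ∀ k, s k ≤ ℓ k := fun k => by rw [hs]; nlinarith [hℓpos k]
  have hlayer : ∀ k, ((nk k + 1).toNat : ℝ) ≤ (1 + w) * n / (w * δ) / b ^ k := fun k => by
    have hns : n / s k = (1 + w) * n / (w * δ) / b ^ k := by
      rw [hs, hℓ]
      field_simp
    rw [hnk, ← hns]
    exact toNat_floor_sub_div_add_one_le hn.le (hspos k) (hsℓ k)
  calc (ℛ.ncard : ℝ)
      ≤ ∑ k ∈ Finset.range (K.toNat + 1), ((nk k + 1).toNat : ℝ) := by
        rw [hℛ]; exact_mod_cast ncard_setOf_layers_le K nk _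
    _ ≤ ∑ k ∈ Finset.range (K.toNat + 1), (1 + w) * n / (w * δ) / b ^ k :=
        Finset.sum_le_sum fun k _ => hlayer k
    _ ≤ (1 + w) * n / (w * δ) * b / (b - 1) := sum_range_div_pow_le hb (by positivity) _
    _ = ((1 + w) * b) / (w * (b - 1)) * (n / δ) := by
        field_simp

/-- Proposition 1(i), cardinality bound: the number of relief intervals is at most
`((1+w)b)/(w(b-1)) · n/δ`. -/
theorem relief_intervals_card_bound
    (n δ w b : ℝ) (hn : 0 < n) (hδ : 0 < δ)
    (hw : 0 < w) (hw1 : w ≤ 1) (hb : 1 < b)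
    (K : ℤ) (hK : K = ⌊Real.logb b ((1 + w) * n / δ)⌋)
    (ℓ s : ℕ → ℝ) (hℓ : ∀ k, ℓ k = b ^ k * δ / (1 + w))
    (hs : ∀ k, s k = w * ℓ k)
    (nk : ℕ → ℤ) (hnk : ∀ k, nk k = ⌊(n - ℓ k) / s k⌋)
    (a : ℕ → ℝ) (ha : ∀ k, a k = n / 2 - (ℓ k + (nk k : ℝ) * s k) / 2)
    (ℛ : Set (Set ℝ))
    (hℛ : ℛ = {R | ∃ k : ℕ, (k : ℤ) ≤ K ∧ ∃ q : ℤ, 0 ≤ q ∧ q ≤ nk k ∧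
      R = Set.Ioc ((q : ℝ) * s k + a k) ((q : ℝ) * s k + ℓ k + a k)}) :
    (ℛ.ncard : ℝ) ≤ ((1 + w) * b) / (w * (b - 1)) * (n / δ) :=
  relief_intervals_card_bound_general n δ w b hn hδ hw hw1 hb K ℓ s hℓ hs nk hnk a ℛ hℛ
end

section
/- With the relief interval construction (layers of intervals of length $\ell_k = b^k\delta_m/(1+w)$ shifted by $s_k = w\ell_k$, for $0 \le k \le \lfloor \log_b((1+w)n/\delta_m)\rfloor$, covering $(0,n]$ up to centering), for every interval $I \subset (0,n]$ with $|I| \ge \delta_m$ there exists a relief interval $R \in \mathcal{R}$ with $R \subset I$ and $|R|/|I| \ge \{(1+w)b\}^{-1}$. -/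
open Real Set

/-- Proposition 1(i), coverage: every interval `I ⊆ (0,n]` with `|I| ≥ δ` contains a relief
interval `R` with `|R|/|I| ≥ ((1+w)b)⁻¹`. -/
theorem relief_intervals_coverage
    (n δ w b : ℝ) (hn : 0 < n) (hδ : 0 < δ) (hδn : δ ≤ n)
    (hw : 0 < w) (hw1 : w ≤ 1) (hb : 1 < b)
    (K : ℤ) (hK : K = ⌊Real.logb b ((1 + w) * n / δ)⌋)
    (ℓ s : ℕ → ℝ) (hℓ : ∀ k, ℓ k = b ^ k * δ / (1 + w))
    (hs : ∀ k, s k = w * ℓ k)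
    (nk : ℕ → ℤ) (hnk : ∀ k, nk k = ⌊(n - ℓ k) / s k⌋)
    (a : ℕ → ℝ) (ha : ∀ k, a k = n / 2 - (ℓ k + (nk k : ℝ) * s k) / 2) :
    ∀ x y : ℝ, 0 ≤ x → y ≤ n → δ ≤ y - x →
      ∃ k : ℕ, (k : ℤ) ≤ K ∧ ∃ q : ℤ, 0 ≤ q ∧ q ≤ nk k ∧
        Set.Ioc ((q : ℝ) * s k + a k) ((q : ℝ) * s k + ℓ k + a k) ⊆ Set.Ioc x y ∧
        ((1 + w) * b)⁻¹ ≤ ℓ k / (y - x) := by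
  intro x y hx hy hδL
  set L : ℝ := y - x with hLdef
  have hbpos : (0:ℝ) < b := lt_trans one_pos hb
  have hb1 : b ≠ 1 := hb.ne'
  have hLpos : 0 < L := lt_of_lt_of_le hδ hδL
  have hLn : L ≤ n := by simp only [hLdef]; linarith
  have hLδ : 1 ≤ L / δ := (one_le_div hδ).2 hδL
  have hLδpos : 0 < L / δ := lt_of_lt_of_le one_pos hLδ
  set k0 : ℤ := ⌊Real.logb b (L / δ)⌋ with hk0
  have hfloor0 : 0 ≤ k0 := Int.floor_nonneg.2 (Real.logb_nonneg hb hLδ)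
  set k := k0.toNat with hkdef
  have hcast : ((k : ℕ) : ℝ) = (k0 : ℝ) := by
    rw [hkdef]; exact_mod_cast congrArg (fun z : ℤ => (z : ℝ)) (Int.toNat_of_nonneg hfloor0)
  -- b ^ k ≤ L/δ
  have h1 : (b:ℝ) ^ k ≤ L / δ := by
    have hfl : (k0 : ℝ) ≤ Real.logb b (L / δ) := Int.floor_le _
    calc (b:ℝ) ^ k = b ^ ((k : ℕ) : ℝ) := (Real.rpow_natCast b k).symm
      _ ≤ b ^ Real.logb b (L / δ) :=
          Real.rpow_le_rpow_of_exponent_le hb.le (by rw [hcast]; exact hfl)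
      _ = L / δ := Real.rpow_logb hbpos hb1 hLδpos
  -- L/δ < b^k * b
  have h2 : L / δ < (b:ℝ) ^ k * b := by
    have hfl : Real.logb b (L / δ) < (k0 : ℝ) + 1 := Int.lt_floor_add_one _
    calc L / δ = b ^ Real.logb b (L / δ) := (Real.rpow_logb hbpos hb1 hLδpos).symm
      _ < b ^ ((k0 : ℝ) + 1) := Real.rpow_lt_rpow_of_exponent_lt hb hfl
      _ = (b:ℝ) ^ k * b := by
          rw [Real.rpow_add hbpos, Real.rpow_one, ← hcast, Real.rpow_natCast]
  have hbkδ : (b:ℝ) ^ k * δ ≤ L := by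
    calc (b:ℝ) ^ k * δ ≤ (L / δ) * δ := mul_le_mul_of_nonneg_right h1 hδ.le
      _ = L := by field_simp
  have hLbk : L < (b:ℝ) ^ k * b * δ := by
    calc L = (L / δ) * δ := by field_simp
      _ < (b:ℝ) ^ k * b * δ := mul_lt_mul_of_pos_right h2 hδ
  -- k ≤ K
  have hkK : (k : ℤ) ≤ K := by
    rw [hK, hkdef, Int.toNat_of_nonneg hfloor0]
    apply Int.floor_le_floor
    apply Real.logb_le_logb_of_le hb hLδpos
    gcongr
    nlinarith
  refine ⟨k, hkK, ?_⟩
  -- abbreviations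
  have hℓk : ℓ k = b ^ k * δ / (1 + w) := hℓ k
  have hsk : s k = w * ℓ k := hs k
  have h1w : (0:ℝ) < 1 + w := by linarith
  have hℓpos : 0 < ℓ k := by rw [hℓk]; positivity
  have hspos : 0 < s k := by rw [hsk]; positivity
  have hsum : ℓ k + s k ≤ L := by
    have : (1 + w) * ℓ k = b ^ k * δ := by rw [hℓk]; field_simp
    nlinarith
  have hsumn : ℓ k + s k ≤ n := le_trans hsum hLn
  -- bounds on nk k
  have hNle : ((nk k : ℝ)) * s k ≤ n - ℓ k := by
    have := Int.floor_le ((n - ℓ k) / s k)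
    rw [← hnk k] at this
    calc ((nk k : ℝ)) * s k ≤ ((n - ℓ k) / s k) * s k := mul_le_mul_of_nonneg_right this hspos.le
      _ = n - ℓ k := by field_simp
  have hNgt : n - ℓ k - s k < ((nk k : ℝ)) * s k := by
    have := Int.lt_floor_add_one ((n - ℓ k) / s k)
    rw [← hnk k] at this
    have h' : n - ℓ k < ((nk k : ℝ) + 1) * s k := by
      calc n - ℓ k = ((n - ℓ k) / s k) * s k := by field_simp
        _ < ((nk k : ℝ) + 1) * s k := mul_lt_mul_of_pos_right this hspos
    nlinarith
  have hNnonneg : (0 : ℤ) ≤ nk k := by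
    rw [hnk k]
    apply Int.floor_nonneg.2
    apply div_nonneg _ hspos.le
    nlinarith
  -- bounds on a k
  have hak : a k = n / 2 - (ℓ k + (nk k : ℝ) * s k) / 2 := ha k
  have ha0 : 0 ≤ a k := by rw [hak]; linarith
  have haS : a k < s k := by rw [hak]; linarith
  -- choose q
  set q : ℤ := ⌈(x - a k) / s k⌉ with hq
  have hqle : (x - a k) / s k ≤ (q : ℝ) := Int.le_ceil _
  have hqlt : (q : ℝ) < (x - a k) / s k + 1 := Int.ceil_lt_add_one _
  have hqs_ge : x - a k ≤ (q : ℝ) * s k := by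
    calc x - a k = ((x - a k) / s k) * s k := by field_simp
      _ ≤ (q : ℝ) * s k := mul_le_mul_of_nonneg_right hqle hspos.le
  have hqs_lt : (q : ℝ) * s k < x - a k + s k := by
    have := mul_lt_mul_of_pos_right hqlt hspos
    calc (q : ℝ) * s k < ((x - a k) / s k + 1) * s k := this
      _ = x - a k + s k := by field_simp
  have hq0 : 0 ≤ q := by
    have hr : (-1 : ℝ) < (q : ℝ) := by
      have h1 : -1 < (x - a k) / s k := by
        rw [lt_div_iff₀ hspos]
        linarith
      linarith
    have hz : (-1 : ℤ) < q := by exact_mod_cast hr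
    omega
  have hright : (q : ℝ) * s k + ℓ k + a k ≤ y := by
    have : (q : ℝ) * s k + ℓ k + a k < x + s k + ℓ k := by linarith
    have h2' : x + s k + ℓ k ≤ x + L := by linarith
    have : y = x + L := by rw [hLdef]; ring
    linarith
  have hqN : q ≤ nk k := by
    have hqs_le_n : (q : ℝ) * s k ≤ n - ℓ k := by
      have : (q : ℝ) * s k + ℓ k + a k ≤ n := le_trans hright hy
      linarith
    have : (q : ℝ) ≤ (n - ℓ k) / s k := by
      rw [le_div_iff₀ hspos]; exact hqs_le_n
    rw [hnk k]
    exact Int.le_floor.2 this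
  refine ⟨q, hq0, hqN, ?_, ?_⟩
  · apply Set.Ioc_subset_Ioc
    · linarith
    · exact hright
  · rw [le_div_iff₀ hLpos, inv_mul_le_iff₀ (by positivity)]
    have hval : (1 + w) * b * ℓ k = b ^ k * b * δ := by rw [hℓk]; field_simp
    linarith
end

section
/- Let $d_1, d_2, d_3 > 0$ and $\Delta > 0$. Consider coefficients constant equal to $\boldsymbol{\beta}_a$ on the first $d_1$ indices and $\boldsymbol{\beta}_b$ on the remaining indices, with $\|\boldsymbol{\beta}_b-\boldsymbol{\beta}_a\|_\Sigma^2 = \Delta^2$. Let $V(m)$ denote the within-variation $\sum_{i=1}^{m}\|\boldsymbol{\beta}_i - \bar{\boldsymbol{\beta}}_{1:m}\|_\Sigma^2$ of the first $m$ indices. Then $V(d_1+d_2+d_3) - V(d_1+d_2) = \frac{d_1^2 d_3 \Delta^2}{(d_1+d_2)(d_1+d_2+d_3)}$, and in particular this difference is nonnegative. -/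
open Matrix Finset

/-!
On the first `m = d + k` indices of a sequence equal to `a` on `d` indices and to `b` on `k`,
the mean is `(d • a + k • b) / m`, so `a - mean = -(k/m) • (b - a)` and `b - mean = (d/m) • (b - a)`.
Hence the within-variation is `d (k/m)² Q(b - a) + k (d/m)² Q(b - a) = (d k / m) Q(b - a)`, and the
gap is a difference of two such rational functions.
-/

lemma Finset.sum_range_add_ite {α M : Type*} [AddCommMonoid M] (g : α → M) (a b : α) (d k : ℕ) :
    ∑ i ∈ range (d + k), g (if i < d then a else b) = d • g a + k • g b := by
  rw [sum_range_add, sum_congr rfl fun i hi => by rw [if_pos (mem_range.1 hi)]]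
  simp

lemma Matrix.toQuadraticForm'_apply {n : Type*} [Fintype n] [DecidableEq n]
    (M : Matrix n n ℝ) (x : n → ℝ) : M.toQuadraticForm' x = x ⬝ᵥ M *ᵥ x := by
  simp [Matrix.toQuadraticForm', toLinearMap₂'_apply']

section

variable {E : Type*} [AddCommGroup E] [Module ℝ E]

noncomputable def withinVariation (Q : QuadraticForm ℝ E) (β : ℕ → E) (m : ℕ) : ℝ :=
  ∑ i ∈ range m, Q (β i - (m : ℝ)⁻¹ • ∑ j ∈ range m, β j)

lemma withinVariation_twoLevel (Q : QuadraticForm ℝ E) (a b : E) (d k : ℕ) :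
    withinVariation Q (fun i => if i < d then a else b) (d + k) =
      d * k / (d + k) * Q (b - a) := by
  rcases Nat.eq_zero_or_pos (d + k) with hm | hm
  · obtain ⟨rfl, rfl⟩ : d = 0 ∧ k = 0 := by omega
    simp [withinVariation]
  have hm' : (d : ℝ) + k ≠ 0 := by exact_mod_cast hm.ne'
  have hsum : ∑ j ∈ range (d + k), (if j < d then a else b) = (d : ℝ) • a + (k : ℝ) • b := by
    simpa [Nat.cast_smul_eq_nsmul] using sum_range_add_ite id a b d k
  have hmean_a : a - ((d + k : ℕ) : ℝ)⁻¹ • ((d : ℝ) • a + (k : ℝ) • b) =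
      -((k : ℝ) / (d + k)) • (b - a) := by
    push_cast
    match_scalars <;> field_simp; ring
  have hmean_b : b - ((d + k : ℕ) : ℝ)⁻¹ • ((d : ℝ) • a + (k : ℝ) • b) =
      ((d : ℝ) / (d + k)) • (b - a) := by
    push_cast
    match_scalars <;> field_simp; ring
  rw [withinVariation, hsum, sum_range_add_ite (fun v => Q (v - _)), hmean_a, hmean_b,
    QuadraticMap.map_smul, QuadraticMap.map_smul]
  simp only [smul_eq_mul, nsmul_eq_mul]
  field_simp
  ring

lemma withinVariation_twoLevel_sub (Q : QuadraticForm ℝ E) (a b : E) (d k l : ℕ) :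
    withinVariation Q (fun i => if i < d then a else b) (d + k + l) -
        withinVariation Q (fun i => if i < d then a else b) (d + k) =
      (d : ℝ) ^ 2 * l * Q (b - a) / ((d + k) * (d + k + l)) := by
  rw [add_assoc, withinVariation_twoLevel, withinVariation_twoLevel]
  push_cast
  rcases Nat.eq_zero_or_pos (d + k) with hm | hm
  · obtain ⟨rfl, rfl⟩ : d = 0 ∧ k = 0 := by omega
    simp
  have hm' : (d : ℝ) + k ≠ 0 := by exact_mod_cast hm.ne'
  have hml : (d : ℝ) + (k + l) ≠ 0 := by rw [← add_assoc]; positivity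
  field_simp
  ring

end

theorem variation_gap_general {p : ℕ}
    (S : Matrix (Fin p) (Fin p) ℝ)
    (d1 d2 d3 : ℕ)
    (βa βb : Fin p → ℝ) (Δ : ℝ)
    (hdiff : (βb - βa) ⬝ᵥ S *ᵥ (βb - βa) = Δ ^ 2)
    (β : ℕ → Fin p → ℝ) (hβ : ∀ i, β i = if i < d1 then βa else βb)
    (V : ℕ → ℝ)
    (hV : ∀ m, V m = ∑ i ∈ Finset.range m,
      (β i - (m : ℝ)⁻¹ • ∑ j ∈ Finset.range m, β j) ⬝ᵥ S *ᵥ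
      (β i - (m : ℝ)⁻¹ • ∑ j ∈ Finset.range m, β j)) :
    V (d1 + d2 + d3) - V (d1 + d2) =
      (d1 : ℝ) ^ 2 * d3 * Δ ^ 2 / (((d1 : ℝ) + d2) * ((d1 : ℝ) + d2 + d3)) ∧
    0 ≤ V (d1 + d2 + d3) - V (d1 + d2) := by
  obtain rfl : β = fun i => if i < d1 then βa else βb := funext hβ
  have hV' : V = withinVariation S.toQuadraticForm' fun i => if i < d1 then βa else βb := by
    funext m
    simp only [hV, withinVariation, toQuadraticForm'_apply]
  have hgap := withinVariation_twoLevel_sub S.toQuadraticForm' βa βb d1 d2 d3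
  rw [toQuadraticForm'_apply, hdiff, ← hV'] at hgap
  exact ⟨hgap, hgap ▸ by positivity⟩

/-- Key variation-gap computation: for coefficients equal to `βₐ` on the first `d₁` indices and
`β_b` afterwards, the within-variation `V(m)` of the first `m` indices satisfies
`V(d₁+d₂+d₃) - V(d₁+d₂) = d₁²d₃Δ²/((d₁+d₂)(d₁+d₂+d₃)) ≥ 0`. -/
theorem variation_gap {p : ℕ}
    (S : Matrix (Fin p) (Fin p) ℝ) (hS : S.PosSemidef)
    (d1 d2 d3 : ℕ) (hd1 : 0 < d1) (hd2 : 0 < d2) (hd3 : 0 < d3)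
    (βa βb : Fin p → ℝ) (Δ : ℝ) (hΔ : 0 < Δ)
    (hdiff : (βb - βa) ⬝ᵥ S *ᵥ (βb - βa) = Δ ^ 2)
    (β : ℕ → Fin p → ℝ) (hβ : ∀ i, β i = if i < d1 then βa else βb)
    (V : ℕ → ℝ)
    (hV : ∀ m, V m = ∑ i ∈ Finset.range m,
      (β i - (m : ℝ)⁻¹ • ∑ j ∈ Finset.range m, β j) ⬝ᵥ S *ᵥ
      (β i - (m : ℝ)⁻¹ • ∑ j ∈ Finset.range m, β j)) :
    V (d1 + d2 + d3) - V (d1 + d2) =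
      (d1 : ℝ) ^ 2 * d3 * Δ ^ 2 / (((d1 : ℝ) + d2) * ((d1 : ℝ) + d2 + d3)) ∧
    0 ≤ V (d1 + d2 + d3) - V (d1 + d2) :=
  variation_gap_general S d1 d2 d3 βa βb Δ hdiff β hβ V hV
end
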